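/- arXiv:1111.1320 — 2 statements merged into one kernel-verified Lean document; each statement's English description precedes it below -/
import Mathlib

section
/- The odd complete symmetric polynomials h_k satisfy the same relations as the odd elementary symmetric polynomials: (i) h_i h_{2m−i} = h_{2m−i} h_i whenever 1 ≤ i and 2m−i ≤ a; (ii) h_i h_{2m+1−i} + (−1)^i h_{2m+1−i} h_i = (−1)^i h_{i+1} h_{2m−i} + h_{2m−i} h_{i+1} whenever 1 ≤ i and 2m−i ≤ a−1; (iii) h_1 h_{2m} + h_{2m} h_1 = 2 h_{2m+1} whenever 1 < 2m ≤ a−1. Furthermore the mixed relations hold: ε_i h_{2m−i} = h_{2m−i} ε_i whenever 1 ≤ i and 2m−i ≤ a, and ε_i h_{2m+1−i} + (−1)^i h_{2m+1−i} ε_i = (−1)^i ε_{i+1} h_{2m−i} + h_{2m−i} ε_{i+1} whenever 1 ≤ i and 2m−i ≤ a−1. -/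
open scoped BigOperators

/-- The defining anticommutation relations of the odd polynomial ring. -/
inductive OddRel (a : ℕ) : FreeAlgebra ℤ (Fin a) → FreeAlgebra ℤ (Fin a) → Prop
  | anticomm (i j : Fin a) (h : i ≠ j) :
      OddRel a (FreeAlgebra.ι ℤ i * FreeAlgebra.ι ℤ j)
        (-(FreeAlgebra.ι ℤ j * FreeAlgebra.ι ℤ i))

/-- The ring of odd polynomials in `a` variables over `ℤ`. -/
abbrev OPol (a : ℕ) : Type := RingQuot (OddRel a)

/-- The variable `x_{i+1}` (`0`-based index). -/
noncomputable def OX {a : ℕ} (i : Fin a) : OPol a :=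
  RingQuot.mkRingHom (OddRel a) (FreeAlgebra.ι ℤ i)

/-- The variable `x_i` (`1`-based index), `0` if out of range. -/
noncomputable def xv (a : ℕ) (i : ℕ) : OPol a :=
  if h : 1 ≤ i ∧ i ≤ a then OX ⟨i - 1, by omega⟩ else 0

/-- The signed variable `x̃_i = (−1)^{i−1} x_i` (`0`-based index, so the sign is `(−1)^i`). -/
noncomputable def xt (a : ℕ) (i : Fin a) : OPol a := (-1 : OPol a) ^ (i : ℕ) * OX i

/-- Odd elementary symmetric polynomial `ε_k`. -/
noncomputable def eps (a k : ℕ) : OPol a :=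
  ∑ t ∈ Finset.powersetCard k (Finset.univ : Finset (Fin a)),
    ((t.sort (· ≤ ·)).map (xt a)).prod

/-- Odd complete symmetric polynomial `h_k`. -/
noncomputable def hp (a k : ℕ) : OPol a :=
  ∑ σ : Sym (Fin a) k, (((σ : Multiset (Fin a)).sort (· ≤ ·)).map (xt a)).prod

/-- The ordered monomial `x_1^{c_1} ⋯ x_a^{c_a}`. -/
noncomputable def xmon {a : ℕ} (c : Fin a → ℕ) : OPol a :=
  ((List.finRange a).map fun i => OX i ^ c i).prod

/-- The staircase monomial `x^{δ_a} = x_1^{a−1} x_2^{a−2} ⋯ x_a^0`. -/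
noncomputable def xdelta (a : ℕ) : OPol a :=
  ((List.finRange a).map fun i => OX i ^ (a - 1 - (i : ℕ))).prod

/-- Composite of the operators `d i` along a word, leftmost letter acting last (outermost). -/
noncomputable def dword {a : ℕ} (d : ℕ → OPol a →+ OPol a) : List ℕ → (OPol a →+ OPol a)
  | [] => AddMonoidHom.id _
  | i :: l => (d i).comp (dword d l)

/-- The word `1, (2,1), (3,2,1), …, (a−1,…,2,1)` for the longest element, so that
`dword d (DList a) = ∂_1∘(∂_2∘∂_1)∘⋯∘(∂_{a−1}∘⋯∘∂_1) = D_a`. -/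
def DList (a : ℕ) : List ℕ :=
  ((List.range a).map fun b => (List.range b).reverse.map (· + 1)).flatten

/-- Left multiplication by `f` as a `ℤ`-linear endomorphism. -/
noncomputable def mulL {a : ℕ} (f : OPol a) : Module.End ℤ (OPol a) :=
  (AddMonoidHom.mulLeft f).toIntLinearMap

/-- The generators of the odd nilHecke ring inside `End_ℤ(OPol a)`. -/
noncomputable def onhGens (a : ℕ) (d : ℕ → OPol a →+ OPol a) :
    Set (Module.End ℤ (OPol a)) :=
  {T | (∃ i : Fin a, T = mulL (OX i)) ∨
    (∃ i : ℕ, 1 ≤ i ∧ i + 1 ≤ a ∧ T = (d i).toIntLinearMap)}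

/-- The simple transposition `s_i` (`1`-based) of `{1,…,a}`. -/
def sperm (a : ℕ) (i : ℕ) : Equiv.Perm (Fin a) :=
  if h : 1 ≤ i ∧ i + 1 ≤ a then Equiv.swap ⟨i - 1, by omega⟩ ⟨i, by omega⟩ else 1

/-- The permutation associated to a word in the simple transpositions. -/
def wordPerm (a : ℕ) (l : List ℕ) : Equiv.Perm (Fin a) := (l.map (sperm a)).prod

/-- Evaluation of an (even) multivariate polynomial at the squared variables `x_1², …, x_a²`. -/
noncomputable def sqEval {a : ℕ} (p : MvPolynomial (Fin a) ℤ) : OPol a :=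
  ∑ m ∈ p.support,
    MvPolynomial.coeff m p • ((List.finRange a).map fun i => OX i ^ (2 * m i)).prod

/-- The odd symmetrization operator `S(f) = (−1)^{C(a,3)} w₀(D_a(f·x^{δ_a}))`. -/
noncomputable def oddSymzn (a : ℕ) (d : ℕ → OPol a →+ OPol a) (W0 : OPol a →+* OPol a)
    (f : OPol a) : OPol a :=
  (-1 : OPol a) ^ Nat.choose a 3 * W0 (dword d (DList a) (f * xdelta a))

/-- The odd Schur polynomial `s_α = (−1)^{C(a,3)} w₀(D_a(x^α·x^{δ_a}))`. -/
noncomputable def schurP (a : ℕ) (d : ℕ → OPol a →+ OPol a) (W0 : OPol a →+* OPol a)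
    (α : Fin a → ℕ) : OPol a :=
  (-1 : OPol a) ^ Nat.choose a 3 * W0 (dword d (DList a) (xmon α * xdelta a))

/-- The 0-Hecke generator `∂̄_r = x_r ∘ ∂_r`. -/
noncomputable def dbar (a : ℕ) (d : ℕ → OPol a →+ OPol a) (r : ℕ) : OPol a →+ OPol a :=
  (AddMonoidHom.mulLeft (xv a r)).comp (d r)

/-- The `ℤ`-span of products of exactly `n` variables: the degree-`2n` component of `OPol a`. -/
def degComp (a n : ℕ) : Submodule ℤ (OPol a) :=
  Submodule.span ℤ {f : OPol a | ∃ l : List (Fin a), l.length = n ∧ f = (l.map OX).prod}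

/-- Odd Schubert polynomial `𝔰_w = ∂_{w⁻¹w₀}(x^{δ_a})` for a fixed choice `red` of
reduced expressions. -/
noncomputable def schubert (a : ℕ) (d : ℕ → OPol a →+ OPol a)
    (red : Equiv.Perm (Fin a) → List ℕ) (w : Equiv.Perm (Fin a)) : OPol a :=
  dword d (red (w⁻¹ * Fin.revPerm)) (xdelta a)

/-- Product of odd elementary symmetric polynomials along the parts of a partition,
in non-increasing order. -/
noncomputable def epsPart (a : ℕ) {n : ℕ} (p : Nat.Partition n) : OPol a :=
  (((p.parts.sort (· ≤ ·)).reverse).map (eps a)).prod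

/-!
Adjoin the variables one at a time, from the last to the first. For generating functions
`E(t) = ∏ (1 + x̃ₖ t)` and `H(t) = ∏ (1 - x̃ₖ t)⁻¹`, adjoining `y` multiplies `E` by `1 + y t` and `H`
by `(1 + y t)(1 - y² t²)⁻¹`. On coefficient sequences, relations (i) and (ii) between two series are
preserved when both are multiplied by `1 + y t`, provided `y` commutes with their `i`-th coefficients
up to the sign `(-1)^i`, and when one of them is multiplied by `(1 - z t²)⁻¹`, provided `z` commutes
with the coefficients of the other. Both hold for `y` anticommuting with the variables already
adjoined and `z = y²`. Relation (iii) is relation (ii) at `i = 0`, since `h₀ = 1`.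
-/

namespace OddSymmetric

variable {R : Type*} [Ring R]

theorem cast_negOnePow_eq_one_or (i : ℤ) :
    (i.negOnePow : R) = 1 ∨ (i.negOnePow : R) = -1 := by
  rcases Int.units_eq_one_or i.negOnePow with h | h <;> simp [h]

theorem negOnePow_eq_of_even_add {i j : ℤ} (h : Even (i + j)) : j.negOnePow = i.negOnePow :=
  (Int.negOnePow_eq_iff _ _).mpr <| Int.even_sub.mpr (Int.even_add.mp h).symm

theorem negOnePow_sub_two (i : ℤ) : (i - 2).negOnePow = i.negOnePow :=
  negOnePow_eq_of_even_add (by grind)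

/-- The coefficients of `(1 + y t) u(t)`. -/
def mulOneAdd (y : R) (u : ℤ → R) (i : ℤ) : R := u i + y * u (i - 1)

/-- The coefficients of `(1 - z t²)⁻¹ u(t)`, for `u` supported in nonnegative degrees. -/
def mulGeomSq (z : R) (u : ℤ → R) (i : ℤ) : R :=
  if i < 0 then 0 else u i + z * mulGeomSq z u (i - 2)
termination_by (i + 2).toNat

variable {u v : ℤ → R} {x y z : R}

theorem mulGeomSq_of_neg {i : ℤ} (hi : i < 0) : mulGeomSq z u i = 0 := by
  rw [mulGeomSq, if_pos hi]

theorem mulGeomSq_of_nonneg {i : ℤ} (hi : 0 ≤ i) :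
    mulGeomSq z u i = u i + z * mulGeomSq z u (i - 2) := by
  rw [mulGeomSq, if_neg (not_lt.mpr hi)]

theorem mulGeomSq_eq (hu : ∀ i < 0, u i = 0) (i : ℤ) :
    mulGeomSq z u i = u i + z * mulGeomSq z u (i - 2) := by
  rcases lt_or_ge i 0 with hi | hi
  · rw [mulGeomSq_of_neg hi, mulGeomSq_of_neg (by omega), hu i hi, mul_zero, add_zero]
  · exact mulGeomSq_of_nonneg hi

def SignCommute (y : R) (u : ℤ → R) : Prop :=
  ∀ i, y * u i = (i.negOnePow : R) * (u i * y)

structure OddRelations (u v : ℤ → R) : Prop where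
  comm : ∀ i j, Even (i + j) → u i * v j = v j * u i
  mix : ∀ i j, Even (i + j) → u i * v (j + 1) + (i.negOnePow : R) * (v (j + 1) * u i) =
    (i.negOnePow : R) * (u (i + 1) * v j) + v j * u (i + 1)

theorem OddRelations.symm (h : OddRelations u v) : OddRelations v u where
  comm i j hij := (h.comm j i (by rwa [add_comm])).symm
  mix i j hij := by
    have m := h.mix j i (by rwa [add_comm])
    rw [negOnePow_eq_of_even_add hij] at m
    linear_combination (norm := noncomm_ring) -m

theorem OddRelations.comm_natCast (h : OddRelations u v) {i j : ℕ} (hij : Even (i + j)) :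
    u i * v j = v j * u i :=
  h.comm i j (by exact_mod_cast hij)

theorem OddRelations.mix_natCast (h : OddRelations u v) {i j : ℕ} (hij : Even (i + j)) :
    u i * v ↑(j + 1) + (-1) ^ i * (v ↑(j + 1) * u i) =
      (-1) ^ i * (u ↑(i + 1) * v j) + v j * u ↑(i + 1) := by
  have m := h.mix i j (by exact_mod_cast hij)
  rw [Int.cast_negOnePow_natCast] at m
  exact_mod_cast m

theorem OddRelations.mulOneAdd (h : OddRelations u v) (hu : SignCommute y u)
    (hv : SignCommute y v) : OddRelations (mulOneAdd y u) (mulOneAdd y v) where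
  -- The certificates move every `y` to the left; they only hold for `s = 1` and `s = -1`.
  comm i j hij := by
    have c₀ := h.comm i j hij
    have c₁ := h.comm (i - 1) (j - 1) (by grind)
    have m := h.mix (i - 1) (j - 1) (by grind)
    have hu₀ := hu i
    have hu₁ := hu (i - 1)
    have hv₀ := hv j
    have hv₁ := hv (j - 1)
    have hs := cast_negOnePow_eq_one_or (R := R) i
    simp only [sub_add_cancel, Int.negOnePow_sub, Int.negOnePow_one, negOnePow_eq_of_even_add hij,
      mul_neg, mul_one, Units.val_neg, Int.cast_neg] at m hu₁ hv₀ hv₁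
    generalize (i.negOnePow : R) = s at *
    unfold OddSymmetric.mulOneAdd
    linear_combination (norm := skip) c₀ - s * y * y * c₁ + y * m - s * hu₀ * v (j - 1)
      + s * y * hu₁ * v (j - 1) + s * hv₀ * u (i - 1) - s * y * hv₁ * u (i - 1)
    rcases hs with rfl | rfl <;> noncomm_ring
  mix i j hij := by
    have m₀ := h.mix i j hij
    have m₁ := h.mix (i - 1) (j - 1) (by grind)
    have c₁ := h.comm (i - 1) (j + 1) (by grind)
    have c₂ := h.comm (i + 1) (j - 1) (by grind)
    have hu₀ := hu i
    have hu₁ := hu (i - 1)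
    have hu₂ := hu (i + 1)
    have hv₀ := hv j
    have hv₁ := hv (j - 1)
    have hv₂ := hv (j + 1)
    have hs := cast_negOnePow_eq_one_or (R := R) i
    simp only [sub_add_cancel, Int.negOnePow_sub, Int.negOnePow_add,
      Int.negOnePow_one, negOnePow_eq_of_even_add hij, mul_neg, mul_one, Units.val_neg,
      Int.cast_neg] at m₁ hu₁ hu₂ hv₀ hv₁ hv₂ ⊢
    generalize (i.negOnePow : R) = s at *
    unfold OddSymmetric.mulOneAdd
    linear_combination (norm := skip) m₀ + y * c₁ + y * c₂ - s * y * y * m₁ - s * hu₀ * v j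
      + s * y * hu₁ * v j + hv₂ * u (i - 1) - y * hv₀ * u (i - 1) - hu₂ * v (j - 1)
      + y * hu₀ * v (j - 1) + s * hv₀ * u i - s * y * hv₁ * u i
    rcases hs with rfl | rfl <;> noncomm_ring

theorem OddRelations.mulGeomSq_left (h : OddRelations u v) (hu : ∀ i < 0, u i = 0)
    (hz : ∀ j, Commute z (v j)) : OddRelations (mulGeomSq z u) v where
  comm i := by
    induction i using mulGeomSq.induct with
    | case1 i hi => simp [mulGeomSq_of_neg hi]
    | case2 i _ ih =>
      intro j hij
      rw [mulGeomSq_eq hu]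
      linear_combination (norm := noncomm_ring)
        h.comm i j hij + z * ih j (by grind) + (hz j).eq * mulGeomSq z u (i - 2)
  mix i := by
    induction i using mulGeomSq.induct with
    | case1 i hi =>
      intro j hij
      simpa [mulGeomSq_of_neg hi, mulGeomSq_eq hu (i + 1),
        mulGeomSq_of_neg (show i + 1 - 2 < 0 by omega), hu i hi] using h.mix i j hij
    | case2 i _ ih =>
      intro j hij
      have ih' := ih j (by grind)
      rw [negOnePow_sub_two, show i - 2 + 1 = i + 1 - 2 by ring] at ih'
      have hs : (i.negOnePow : R) * z = z * i.negOnePow := (Int.cast_commute _ z).eq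
      rw [mulGeomSq_eq hu i, mulGeomSq_eq hu (i + 1)]
      linear_combination (norm := noncomm_ring) h.mix i j hij + z * ih'
        - (i.negOnePow : R) * (hz (j + 1)).eq * mulGeomSq z u (i - 2)
        + hs * v (j + 1) * mulGeomSq z u (i - 2) - hs * mulGeomSq z u (i + 1 - 2) * v j
        + (hz j).eq * mulGeomSq z u (i + 1 - 2)

theorem SignCommute.mulOneAdd (h : SignCommute x u) (hxy : x * y = -(y * x)) :
    SignCommute x (mulOneAdd y u) := by
  intro i
  have h₀ := h i
  have h₁ := h (i - 1)
  have hs := cast_negOnePow_eq_one_or (R := R) i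
  simp only [Int.negOnePow_sub, Int.negOnePow_one, mul_neg, mul_one, Units.val_neg,
    Int.cast_neg] at h₁
  generalize (i.negOnePow : R) = s at *
  unfold OddSymmetric.mulOneAdd
  linear_combination (norm := skip) h₀ + hxy * u (i - 1) - y * h₁
  rcases hs with rfl | rfl <;> noncomm_ring

theorem SignCommute.mulGeomSq (h : SignCommute x u) (hxz : Commute x z) :
    SignCommute x (mulGeomSq z u) := by
  intro i
  induction i using mulGeomSq.induct with
  | case1 i hi => simp [mulGeomSq_of_neg hi]
  | case2 i hi ih =>
    have hs : (i.negOnePow : R) * z = z * i.negOnePow := (Int.cast_commute _ z).eq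
    rw [negOnePow_sub_two] at ih
    rw [mulGeomSq_of_nonneg (not_lt.mp hi)]
    linear_combination (norm := noncomm_ring) h i + hxz.eq * OddSymmetric.mulGeomSq z u (i - 2)
      + z * ih - hs * OddSymmetric.mulGeomSq z u (i - 2) * x

theorem SignCommute.commute_mul_self (h : SignCommute y u) (i : ℤ) : Commute (y * y) (u i) := by
  have h₀ := h i
  have hs := cast_negOnePow_eq_one_or (R := R) i
  generalize (i.negOnePow : R) = s at *
  show y * y * u i = u i * (y * y)
  linear_combination (norm := skip) y * h₀ + s * h₀ * y
  rcases hs with rfl | rfl <;> noncomm_ring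

theorem commute_mul_self_of_mul_eq_neg (h : x * y = -(y * x)) : Commute x (y * y) := by
  show x * (y * y) = y * y * x
  linear_combination (norm := noncomm_ring) h * y - y * h

theorem signCommute_single (x : R) : SignCommute x (Pi.single 0 1) := by
  intro i
  rcases eq_or_ne i 0 with rfl | hi <;> simp [*]

theorem oddRelations_single : OddRelations (Pi.single 0 1 : ℤ → R) (Pi.single 0 1) where
  comm i j _ := by
    rcases eq_or_ne i 0 with rfl | hi <;> simp [*]
  mix i j hij := by
    rw [Int.even_iff] at hij
    simp only [Pi.single_apply]
    split_ifs <;> first | omega | simp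

def esymmSeq : List R → ℤ → R
  | [] => Pi.single 0 1
  | y :: l => mulOneAdd y (esymmSeq l)

/-- `(1 - y t)⁻¹ = (1 + y t) (1 - y² t²)⁻¹` separates the even powers of `y`, which commute with
the later coefficients, from the odd ones. -/
def hsymmSeq : List R → ℤ → R
  | [] => Pi.single 0 1
  | y :: l => mulOneAdd y (mulGeomSq (y * y) (hsymmSeq l))

theorem esymmSeq_of_neg (l : List R) {i : ℤ} (hi : i < 0) : esymmSeq l i = 0 := by
  induction l generalizing i with
  | nil => simp [esymmSeq, hi.ne]
  | cons y l ih => simp [esymmSeq, OddSymmetric.mulOneAdd, ih hi, ih (show i - 1 < 0 by omega)]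

theorem hsymmSeq_of_neg (l : List R) (i : ℤ) (hi : i < 0) : hsymmSeq l i = 0 := by
  cases l with
  | nil => simp [hsymmSeq, hi.ne]
  | cons y l =>
    simp [hsymmSeq, OddSymmetric.mulOneAdd, mulGeomSq_of_neg hi,
      mulGeomSq_of_neg (show i - 1 < 0 by omega)]

theorem SignCommute.esymmSeq {l : List R} (h : ∀ y ∈ l, x * y = -(y * x)) :
    SignCommute x (esymmSeq l) := by
  induction l with
  | nil => exact signCommute_single x
  | cons y l ih =>
    simp only [List.forall_mem_cons] at h
    exact (ih h.2).mulOneAdd h.1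

theorem SignCommute.hsymmSeq {l : List R} (h : ∀ y ∈ l, x * y = -(y * x)) :
    SignCommute x (hsymmSeq l) := by
  induction l with
  | nil => exact signCommute_single x
  | cons y l ih =>
    simp only [List.forall_mem_cons] at h
    exact ((ih h.2).mulGeomSq (commute_mul_self_of_mul_eq_neg h.1)).mulOneAdd h.1

theorem oddRelations_esymmSeq_hsymmSeq {l : List R}
    (hl : l.Pairwise fun x y => x * y = -(y * x)) :
    OddRelations (esymmSeq l) (hsymmSeq l) ∧ OddRelations (hsymmSeq l) (hsymmSeq l) := by
  induction l with
  | nil => exact ⟨oddRelations_single, oddRelations_single⟩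
  | cons y l ih =>
    obtain ⟨hy, hl⟩ := List.pairwise_cons.mp hl
    obtain ⟨hEH, hHH⟩ := ih hl
    have hE := SignCommute.esymmSeq hy
    have hH := SignCommute.hsymmSeq hy
    have hP := hH.mulGeomSq (Commute.refl y |>.mul_right (Commute.refl y))
    have hHP := (hHH.symm.mulGeomSq_left (hsymmSeq_of_neg l) hH.commute_mul_self).symm
    exact ⟨(hEH.symm.mulGeomSq_left (hsymmSeq_of_neg l) hE.commute_mul_self).symm.mulOneAdd hE hP,
      (hHP.mulGeomSq_left (hsymmSeq_of_neg l) hP.commute_mul_self).mulOneAdd hP hP⟩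

theorem esymmSeq_map {ι : Type*} (l : List ι) (f : ι → R) (k : ℕ) :
    esymmSeq (l.map f) k = ((l.sublistsLen k).map fun s => (s.map f).prod).sum := by
  induction l generalizing k with
  | nil => cases k <;> simp [esymmSeq, Nat.cast_add_one_ne_zero]
  | cons x l ih =>
    cases k with
    | zero => simpa [esymmSeq, OddSymmetric.mulOneAdd, esymmSeq_of_neg] using ih 0
    | succ k =>
      simp only [List.map_cons, esymmSeq, OddSymmetric.mulOneAdd, List.sublistsLen_succ_cons,
        List.map_append, List.sum_append, List.map_map, Function.comp_def, List.prod_cons,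
        List.sum_map_mul_left]
      rw [← ih, ← ih]
      push_cast
      simp

theorem hsymmSeq_cons (y : R) (l : List R) (i : ℤ) :
    hsymmSeq (y :: l) i = hsymmSeq l i + y * hsymmSeq (y :: l) (i - 1) := by
  simp only [hsymmSeq, OddSymmetric.mulOneAdd]
  rw [mulGeomSq_eq (hsymmSeq_of_neg l) i, show i - 1 - 1 = i - 2 by ring]
  noncomm_ring

theorem hsymmSeq_zero (l : List R) : hsymmSeq l 0 = 1 := by
  induction l with
  | nil => simp [hsymmSeq]
  | cons y l ih => rw [hsymmSeq_cons, ih, hsymmSeq_of_neg _ _ (by norm_num), mul_zero, add_zero]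

theorem hsymmSeq_map {ι : Type*} [LinearOrder ι] {l : List ι} (hl : l.Pairwise (· ≤ ·))
    (f : ι → R) (k : ℕ) :
    hsymmSeq (l.map f) k =
      ((l.sym k).map fun σ : Sym ι k => (((σ : Multiset ι).sort (· ≤ ·)).map f).prod).sum := by
  induction k generalizing l with
  | zero => simp [hsymmSeq_zero, List.sym]
  | succ k ihk =>
    induction l with
    | nil => simp [hsymmSeq, List.sym, Nat.cast_add_one_ne_zero]
    | cons x l ih =>
      obtain ⟨hx, hl'⟩ := List.pairwise_cons.mp hl
      have hsort : ∀ σ ∈ (x :: l).sym k,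
          ((((x ::ₛ σ : Sym ι (k + 1)) : Multiset ι).sort (· ≤ ·)).map f).prod =
            f x * ((((σ : Multiset ι).sort (· ≤ ·)).map f).prod) := by
        intro σ hσ
        rw [Sym.coe_cons, Multiset.sort_cons]
        · simp
        · intro b hb
          rcases List.mem_cons.mp (List.mem_of_mem_of_mem_sym hb hσ) with rfl | hb
          · exact le_rfl
          · exact hx b hb
      rw [List.map_cons, hsymmSeq_cons, ← List.map_cons, show ((k + 1 : ℕ) : ℤ) - 1 = k by simp,
        ih hl', ihk hl, List.sym, List.map_append, List.sum_append, List.map_map,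
        Function.comp_def, List.map_congr_left hsort, List.sum_map_mul_left, add_comm]

end OddSymmetric

open OddSymmetric

theorem OX_mul_OX_of_ne {a : ℕ} {i j : Fin a} (h : i ≠ j) : OX i * OX j = -(OX j * OX i) := by
  rw [OX, OX, ← map_mul, ← map_mul, ← map_neg]
  exact RingQuot.mkRingHom_rel (OddRel.anticomm i j h)

theorem xt_mul_xt_of_ne {a : ℕ} {i j : Fin a} (h : i ≠ j) :
    xt a i * xt a j = -(xt a j * xt a i) := by
  have hOX := OX_mul_OX_of_ne h
  rcases neg_one_pow_eq_or (OPol a) i with hi | hi <;>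
    rcases neg_one_pow_eq_or (OPol a) j with hj | hj <;>
    simp [xt, hi, hj, hOX]

noncomputable def xtList (a : ℕ) : List (OPol a) := (List.finRange a).map (xt a)

theorem pairwise_anticomm_xtList (a : ℕ) : (xtList a).Pairwise fun x y => x * y = -(y * x) :=
  List.pairwise_map.mpr ((List.nodup_finRange a).imp xt_mul_xt_of_ne)

theorem eps_eq_esymmSeq (a k : ℕ) : eps a k = esymmSeq (xtList a) k := by
  have hsort : ∀ s ∈ (List.finRange a).sublistsLen k, ((s : Multiset (Fin a)).sort (· ≤ ·)) = s :=
    fun s hs => List.mergeSort_eq_self _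
      (((List.pairwise_lt_finRange a).sublist (List.mem_sublistsLen.mp hs).1).imp le_of_lt)
  calc eps a k
      = ((Multiset.powersetCard k (Finset.univ : Finset (Fin a)).val).map
          fun m => ((m.sort (· ≤ ·)).map (xt a)).prod).sum := by
        rw [← Finset.map_val_val_powersetCard, Multiset.map_map]; rfl
    _ = esymmSeq (xtList a) k := by
        rw [xtList, esymmSeq_map, Fin.univ_def]
        simp only [Multiset.powersetCard_coe, Multiset.map_coe, Multiset.sum_coe, List.map_map]
        exact congrArg List.sum (List.map_congr_left fun s hs => by simp [hsort s hs])

theorem hp_eq_hsymmSeq (a k : ℕ) : hp a k = hsymmSeq (xtList a) k := by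
  have huniv : ((List.finRange a).sym k).toFinset = Finset.univ := by
    refine Finset.eq_univ_of_card _ ?_
    rw [List.toFinset_card_of_nodup ((List.nodup_finRange a).sym k), List.length_sym,
      List.length_finRange, Sym.card_sym_eq_multichoose, Fintype.card_fin]
  rw [xtList, hsymmSeq_map ((List.pairwise_lt_finRange a).imp le_of_lt), hp, ← huniv,
    List.sum_toFinset _ ((List.nodup_finRange a).sym k)]

/-- the odd complete symmetric polynomials satisfy the same relations as the
odd elementary ones, together with the mixed relations. -/
theorem odd_complete_symmetric_relations (a : ℕ) :
    (∀ i j : ℕ, 1 ≤ i → j ≤ a → Even (i + j) →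
      hp a i * hp a j = hp a j * hp a i) ∧
    (∀ i j : ℕ, 1 ≤ i → j + 1 ≤ a → Even (i + j) →
      hp a i * hp a (j + 1) + (-1 : OPol a) ^ i * (hp a (j + 1) * hp a i) =
        (-1 : OPol a) ^ i * (hp a (i + 1) * hp a j) + hp a j * hp a (i + 1)) ∧
    (∀ m : ℕ, 1 ≤ m → 2 * m + 1 ≤ a →
      hp a 1 * hp a (2 * m) + hp a (2 * m) * hp a 1 = 2 * hp a (2 * m + 1)) ∧
    (∀ i j : ℕ, 1 ≤ i → j ≤ a → Even (i + j) →
      eps a i * hp a j = hp a j * eps a i) ∧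
    (∀ i j : ℕ, 1 ≤ i → j + 1 ≤ a → Even (i + j) →
      eps a i * hp a (j + 1) + (-1 : OPol a) ^ i * (hp a (j + 1) * eps a i) =
        (-1 : OPol a) ^ i * (eps a (i + 1) * hp a j) + hp a j * eps a (i + 1)) := by
  obtain ⟨hEH, hHH⟩ := oddRelations_esymmSeq_hsymmSeq (pairwise_anticomm_xtList a)
  simp only [eps_eq_esymmSeq, hp_eq_hsymmSeq]
  refine ⟨fun i j _ _ hij => hHH.comm_natCast hij, fun i j _ _ hij => hHH.mix_natCast hij,
    fun m _ _ => ?_, fun i j _ _ hij => hEH.comm_natCast hij,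
    fun i j _ _ hij => hEH.mix_natCast hij⟩
  have h := hHH.mix_natCast (i := 0) (j := 2 * m) (by simp)
  simp only [Nat.cast_zero, hsymmSeq_zero, pow_zero, zero_add, one_mul, mul_one] at h
  rw [← h]
  exact (two_mul _).symm
end

section
/- Define the operators ∂̄_r := x_r∘∂_r (left multiplication by x_r composed with ∂_r) on OPol_a, for 1 ≤ r ≤ a−1. These generate a copy of the 0-Hecke algebra: ∂̄_r∘∂̄_r = ∂̄_r; ∂̄_r∘∂̄_{r+1}∘∂̄_r = ∂̄_{r+1}∘∂̄_r∘∂̄_{r+1} for 1 ≤ r ≤ a−2; and ∂̄_r∘∂̄_s = ∂̄_s∘∂̄_r whenever |r−s| > 1. -/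
open scoped BigOperators

/-!
Each identity between composites of the `∂_i` is proved by showing that the two sides agree at
`1` and that agreement at `g` propagates to `x_j g`: the twisted Leibniz rule gives
`∂_i (x_j g) = [j ∈ {i, i+1}] g - x_{s_i j} ∂_i g`, so after expanding both sides the claim reduces
to how the transpositions `s_i` act on indices. As the `x_j` generate `OPol a`, this yields
`∂_i² = 0`, the anticommutation of distant `∂`'s and the braid relation. The relations for
`∂̄_r = x_r ∂_r` follow by pushing each `∂` past a single variable and anticommuting variables.
-/

open Equiv

section OddDivDiff

variable {R : Type*} [Ring R]

theorem AddMonoidHom.eq_of_map_one_of_map_generator_mul {ι : Type*} {X : ι → R}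
    (hX : Subring.closure (Set.range X) = ⊤) {B₁ B₂ : R →+ R} (h1 : B₁ 1 = B₂ 1)
    (hmul : ∀ j g, B₁ g = B₂ g → B₁ (X j * g) = B₂ (X j * g)) (f : R) : B₁ f = B₂ f := by
  suffices ∀ g, B₁ g = B₂ g → B₁ (f * g) = B₂ (f * g) by simpa using this 1 h1
  have hf : f ∈ Subring.closure (Set.range X) := hX ▸ Subring.mem_top f
  induction hf using Subring.closure_induction with
  | mem x hx => obtain ⟨j, rfl⟩ := hx; exact hmul j
  | zero => simp
  | one => simp
  | add x y _ _ hx hy => intro g hg; simp [add_mul, hx g hg, hy g hg]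
  | neg x _ hx => intro g hg; simp [hx g hg]
  | mul x y _ _ hx hy => intro g hg; rw [mul_assoc]; exact hx _ (hy g hg)

/-- Generators are indexed by `ℕ` (for `OPol a`, `xv a j = 0` unless `1 ≤ j ≤ a`), so that `s_i`
acts on indices by `swap i (i + 1)`. -/
structure IsOddDivDiff (X : ℕ → R) (s : R →+* R) (d : R →+ R) (i : ℕ) : Prop where
  map_X : ∀ j, s (X j) = -X (swap i (i + 1) j)
  apply_X : ∀ j, d (X j) = if j = i ∨ j = i + 1 then 1 else 0
  leibniz : ∀ f g, d (f * g) = d f * g + s f * d g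

namespace IsOddDivDiff

variable {X : ℕ → R} {s s' : R →+* R} {d d' : R →+ R} {i r t : ℕ}

theorem apply_one (h : IsOddDivDiff X s d i) : d 1 = 0 := by
  simpa using h.leibniz 1 1

theorem apply_X_mul (h : IsOddDivDiff X s d i) (j : ℕ) (g : R) :
    d (X j * g) = (if j = i ∨ j = i + 1 then g else 0) - X (swap i (i + 1) j) * d g := by
  rw [h.leibniz, h.apply_X, h.map_X, ite_mul, one_mul, zero_mul, neg_mul, sub_eq_add_neg]

theorem apply_apply_eq_zero (h : IsOddDivDiff X s d i)
    (hX : Subring.closure (Set.range X) = ⊤) (f : R) : d (d f) = 0 := by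
  refine (d.comp d).eq_of_map_one_of_map_generator_mul (B₂ := 0) hX (by simp [h.apply_one])
    (fun j g hg => ?_) f
  have hmem : (swap i (i + 1) j = i ∨ swap i (i + 1) j = i + 1) ↔ (j = i ∨ j = i + 1) := by
    simp [swap_apply_eq_iff, or_comm]
  simp only [AddMonoidHom.comp_apply, AddMonoidHom.zero_apply] at hg ⊢
  simp only [h.apply_X_mul, map_sub, apply_ite d, map_zero, hmem, swap_apply_self, hg, mul_zero,
    sub_zero, sub_self]

theorem apply_apply_eq_neg_of_far (hr : IsOddDivDiff X s d r) (ht : IsOddDivDiff X s' d' t)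
    (hX : Subring.closure (Set.range X) = ⊤) (hfar : r + 1 < t ∨ t + 1 < r) (f : R) :
    d (d' f) = -d' (d f) := by
  refine (d.comp d').eq_of_map_one_of_map_generator_mul (B₂ := -(d'.comp d)) hX
    (by simp [hr.apply_one, ht.apply_one]) (fun j g hg => ?_) f
  have hmem_r : (swap t (t + 1) j = r ∨ swap t (t + 1) j = r + 1) ↔ (j = r ∨ j = r + 1) := by
    simp (disch := omega) [swap_apply_eq_iff, swap_apply_of_ne_of_ne]
  have hmem_t : (swap r (r + 1) j = t ∨ swap r (r + 1) j = t + 1) ↔ (j = t ∨ j = t + 1) := by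
    simp (disch := omega) [swap_apply_eq_iff, swap_apply_of_ne_of_ne]
  have hcomm : swap r (r + 1) (swap t (t + 1) j) = swap t (t + 1) (swap r (r + 1) j) :=
    Perm.ext_iff.mp (Perm.disjoint_swap_swap (by simp; omega)).commute.eq j
  simp only [AddMonoidHom.comp_apply, AddMonoidHom.neg_apply] at hg ⊢
  simp only [hr.apply_X_mul, ht.apply_X_mul, map_sub, apply_ite d, apply_ite d', map_zero,
    hmem_r, hmem_t, hcomm, hg, mul_neg]
  abel

theorem braid (hp : IsOddDivDiff X s d r) (hq : IsOddDivDiff X s' d' (r + 1))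
    (hX : Subring.closure (Set.range X) = ⊤) (f : R) :
    d (d' (d f)) = d' (d (d' f)) := by
  refine ((d.comp d').comp d).eq_of_map_one_of_map_generator_mul (B₂ := (d'.comp d).comp d') hX
    (by simp [hp.apply_one, hq.apply_one]) (fun j g hg => ?_) f
  have hmem_p : (swap r (r + 1) (swap (r + 1) (r + 1 + 1) j) = r + 1 ∨
      swap r (r + 1) (swap (r + 1) (r + 1 + 1) j) = r + 1 + 1) ↔ (j = r ∨ j = r + 1) := by
    simp (disch := omega) [swap_apply_eq_iff, swap_apply_of_ne_of_ne]
  have hmem_q : (swap (r + 1) (r + 1 + 1) (swap r (r + 1) j) = r ∨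
      swap (r + 1) (r + 1 + 1) (swap r (r + 1) j) = r + 1) ↔ (j = r + 1 ∨ j = r + 1 + 1) := by
    simp (disch := omega) [swap_apply_eq_iff, swap_apply_of_ne_of_ne]
  have hbraid : swap r (r + 1) (swap (r + 1) (r + 1 + 1) (swap r (r + 1) j)) =
      swap (r + 1) (r + 1 + 1) (swap r (r + 1) (swap (r + 1) (r + 1 + 1) j)) := by
    rcases (show j < r ∨ j = r ∨ j = r + 1 ∨ j = r + 1 + 1 ∨ r + 1 + 1 < j by omega)
      with h | rfl | rfl | rfl | h <;> simp (disch := omega) [swap_apply_of_ne_of_ne]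
  simp only [AddMonoidHom.comp_apply] at hg ⊢
  simp only [hp.apply_X_mul, hq.apply_X_mul, map_sub, apply_ite d, apply_ite d', map_zero,
    hmem_p, hmem_q, hbraid, hg, hp.apply_apply_eq_zero hX, hq.apply_apply_eq_zero hX, ite_self]
  abel

theorem mul_apply_mul_apply_self (h : IsOddDivDiff X s d i)
    (hX : Subring.closure (Set.range X) = ⊤) (f : R) : X i * d (X i * d f) = X i * d f := by
  rw [h.apply_X_mul, if_pos (Or.inl rfl), h.apply_apply_eq_zero hX, mul_zero, sub_zero]

theorem mul_apply_braid (hp : IsOddDivDiff X s d r) (hq : IsOddDivDiff X s' d' (r + 1))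
    (hX : Subring.closure (Set.range X) = ⊤) (hXX : X (r + 1) * X r = -(X r * X (r + 1)))
    (f : R) :
    X r * d (X (r + 1) * d' (X r * d f)) = X (r + 1) * d' (X r * d (X (r + 1) * d' f)) := by
  have hswap : ∀ m, X (r + 1) * (X r * m) = -(X r * (X (r + 1) * m)) := fun m => by
    rw [← mul_assoc, hXX, neg_mul, mul_assoc]
  have hne : r ≠ r + 1 + 1 := by omega
  have hlhs : X r * d (X (r + 1) * d' (X r * d f)) =
      -(X r * (X r * (X (r + 1) * d (d' (d f))))) := by
    simp (disch := omega) [hp.apply_X_mul, hq.apply_X_mul, swap_apply_of_ne_of_ne, hne]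
    noncomm_ring
  have hrhs : X (r + 1) * d' (X r * d (X (r + 1) * d' f)) =
      -(X (r + 1) * (X r * (X r * d' (d (d' f))))) := by
    simp (disch := omega) [hp.apply_X_mul, hq.apply_X_mul, swap_apply_of_ne_of_ne, hne,
      hq.apply_apply_eq_zero hX]
  rw [hlhs, hrhs, hp.braid hq hX, hswap, hswap, neg_neg, mul_neg]

theorem mul_apply_comm_of_far (hr : IsOddDivDiff X s d r) (ht : IsOddDivDiff X s' d' t)
    (hX : Subring.closure (Set.range X) = ⊤) (hfar : r + 1 < t ∨ t + 1 < r)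
    (hXX : X t * X r = -(X r * X t)) (f : R) :
    X r * d (X t * d' f) = X t * d' (X r * d f) := by
  have htr : ¬(t = r ∨ t = r + 1) := by omega
  have hrt : ¬(r = t ∨ r = t + 1) := by omega
  simp (disch := omega) [hr.apply_X_mul, ht.apply_X_mul, swap_apply_of_ne_of_ne, htr, hrt,
    ht.apply_apply_eq_neg_of_far hr hX (Or.symm hfar)]
  rw [← mul_assoc, ← mul_assoc, hXX, neg_mul]

end IsOddDivDiff

end OddDivDiff

theorem xv_eq_zero {a j : ℕ} (h : ¬(1 ≤ j ∧ j ≤ a)) : xv a j = 0 := dif_neg h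

theorem closure_range_xv (a : ℕ) : Subring.closure (Set.range (xv a)) = ⊤ := by
  have hfree : Subring.closure (Set.range (FreeAlgebra.ι ℤ (X := Fin a))) = ⊤ := by
    refine (Subring.eq_top_iff' _).mpr fun x => ?_
    induction x using FreeAlgebra.induction with
    | grade0 n => simp only [eq_intCast]; exact intCast_mem _ n
    | grade1 i => exact Subring.subset_closure ⟨i, rfl⟩
    | mul x y hx hy => exact mul_mem hx hy
    | add x y hx hy => exact add_mem hx hy
  have hOX : Subring.closure (Set.range (OX (a := a))) = ⊤ := by
    rw [← RingHom.range_eq_top.mpr (RingQuot.mkRingHom_surjective (OddRel a)),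
      RingHom.range_eq_map, ← hfree, RingHom.map_closure, ← Set.range_comp]
    rfl
  refine eq_top_iff.mpr (hOX.ge.trans (Subring.closure_mono ?_))
  rintro _ ⟨i, rfl⟩
  refine ⟨i + 1, ?_⟩
  rw [xv, dif_pos ⟨by omega, i.isLt⟩]
  rfl

theorem xv_mul_xv_of_ne (a : ℕ) {i j : ℕ} (h : i ≠ j) :
    xv a i * xv a j = -(xv a j * xv a i) := by
  unfold xv
  split_ifs with hi hj hj
  · simpa [OX] using RingQuot.mkRingHom_rel
      (OddRel.anticomm ⟨i - 1, by omega⟩ ⟨j - 1, by omega⟩ (by simp [Fin.ext_iff]; omega))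
  all_goals simp

theorem isOddDivDiff_xv {a i : ℕ} {s : OPol a →+* OPol a} {d : OPol a →+ OPol a}
    (hi1 : 1 ≤ i) (hi2 : i + 1 ≤ a)
    (hs : ∀ j, 1 ≤ j → j ≤ a →
      s (xv a j) = if j = i then -xv a (i + 1) else if j = i + 1 then -xv a i else -xv a j)
    (hdx : ∀ j, 1 ≤ j → j ≤ a → d (xv a j) = if j = i ∨ j = i + 1 then 1 else 0)
    (hdL : ∀ f g, d (f * g) = d f * g + s f * d g) : IsOddDivDiff (xv a) s d i where
  map_X j := by
    by_cases hj : 1 ≤ j ∧ j ≤ a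
    · rw [hs j hj.1 hj.2, swap_apply_def]
      split_ifs <;> rfl
    · rw [swap_apply_of_ne_of_ne (by omega) (by omega), xv_eq_zero hj, map_zero, neg_zero]
  apply_X j := by
    by_cases hj : 1 ≤ j ∧ j ≤ a
    · exact hdx j hj.1 hj.2
    · rw [xv_eq_zero hj, map_zero, if_neg (by omega)]
  leibniz := hdL

theorem zero_hecke_relations_general (a : ℕ)
    (s : ℕ → OPol a →+* OPol a)
    (hs : ∀ i j : ℕ, 1 ≤ i → i + 1 ≤ a → 1 ≤ j → j ≤ a →
      s i (xv a j) =
        if j = i then -xv a (i + 1) else if j = i + 1 then -xv a i else -xv a j)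
    (d : ℕ → OPol a →+ OPol a)
    (hdx : ∀ i j : ℕ, 1 ≤ i → i + 1 ≤ a → 1 ≤ j → j ≤ a →
      d i (xv a j) = if j = i ∨ j = i + 1 then 1 else 0)
    (hdL : ∀ i : ℕ, 1 ≤ i → i + 1 ≤ a → ∀ f g : OPol a,
      d i (f * g) = d i f * g + s i f * d i g) :
    (∀ r : ℕ, 1 ≤ r → r + 1 ≤ a → ∀ f : OPol a,
      dbar a d r (dbar a d r f) = dbar a d r f) ∧
    (∀ r : ℕ, 1 ≤ r → r + 2 ≤ a → ∀ f : OPol a,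
      dbar a d r (dbar a d (r + 1) (dbar a d r f)) =
        dbar a d (r + 1) (dbar a d r (dbar a d (r + 1) f))) ∧
    (∀ r t : ℕ, 1 ≤ r → r + 1 ≤ a → 1 ≤ t → t + 1 ≤ a → (r + 1 < t ∨ t + 1 < r) →
      ∀ f : OPol a, dbar a d r (dbar a d t f) = dbar a d t (dbar a d r f)) := by
  have hD : ∀ i, 1 ≤ i → i + 1 ≤ a → IsOddDivDiff (xv a) (s i) (d i) i := fun i h1 h2 =>
    isOddDivDiff_xv h1 h2 (hs i · h1 h2) (hdx i · h1 h2) (hdL i h1 h2)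
  have hX := closure_range_xv a
  refine ⟨fun r h1 h2 f => ?_, fun r h1 h2 f => ?_, fun r t hr1 hr2 ht1 ht2 hfar f => ?_⟩
  · exact (hD r h1 h2).mul_apply_mul_apply_self hX f
  · exact (hD r h1 (by omega)).mul_apply_braid (hD (r + 1) (by omega) h2) hX
      (xv_mul_xv_of_ne a (by omega)) f
  · exact (hD r hr1 hr2).mul_apply_comm_of_far (hD t ht1 ht2) hX hfar
      (xv_mul_xv_of_ne a (by omega)) f

/-- the operators ∂̄_r = x_r∘∂_r satisfy the 0-Hecke relations. -/
theorem zero_hecke_relations (a : ℕ)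
    (s : ℕ → OPol a →+* OPol a)
    (hs : ∀ i j : ℕ, 1 ≤ i → i + 1 ≤ a → 1 ≤ j → j ≤ a →
      s i (xv a j) =
        if j = i then -xv a (i + 1) else if j = i + 1 then -xv a i else -xv a j)
    (d : ℕ → OPol a →+ OPol a)
    (hd1 : ∀ i : ℕ, 1 ≤ i → i + 1 ≤ a → d i 1 = 0)
    (hdx : ∀ i j : ℕ, 1 ≤ i → i + 1 ≤ a → 1 ≤ j → j ≤ a →
      d i (xv a j) = if j = i ∨ j = i + 1 then 1 else 0)
    (hdL : ∀ i : ℕ, 1 ≤ i → i + 1 ≤ a → ∀ f g : OPol a,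
      d i (f * g) = d i f * g + s i f * d i g) :
    (∀ r : ℕ, 1 ≤ r → r + 1 ≤ a → ∀ f : OPol a,
      dbar a d r (dbar a d r f) = dbar a d r f) ∧
    (∀ r : ℕ, 1 ≤ r → r + 2 ≤ a → ∀ f : OPol a,
      dbar a d r (dbar a d (r + 1) (dbar a d r f)) =
        dbar a d (r + 1) (dbar a d r (dbar a d (r + 1) f))) ∧
    (∀ r t : ℕ, 1 ≤ r → r + 1 ≤ a → 1 ≤ t → t + 1 ≤ a → (r + 1 < t ∨ t + 1 < r) →
      ∀ f : OPol a, dbar a d r (dbar a d t f) = dbar a d t (dbar a d r f)) :=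
  zero_hecke_relations_general a s hs d hdx hdL
end
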